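/- arXiv:1205.2179 — 4 statements merged into one kernel-verified Lean document; each statement's English description precedes it below -/
import Mathlib

section
/- Let e ≥ 1 and q a unit modulo e with q a perfect square modulo every divisor of e (e.g. q itself a square integer coprime to e). Then the number of orbits of Z/e under x ↦ qx is odd if e is odd, and even if e is even. -/
/-!
Write `u = v ^ 2` with `v` the unit `r`. Since `v` commutes with `v ^ 2`, multiplication by `v`
permutes the `⟨v ^ 2⟩`-orbits; it is an involution on them and preserves their sizes. An orbit
fixed by it satisfies `v • a = v ^ (2k) • a`, so the `v`-period of `a` is odd, and then `v ^ 2`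
has the same period: the orbit has odd size. Pairing orbits by the involution shows that
`∑ (|O| + 1)` is even, i.e. `e = ∑ |O|` has the parity of the number of orbits.
-/

open MulAction Function Subgroup

theorem sum_mod_two_eq_card_mod_two_of_involutive {β : Type*} [Fintype β] {σ : β → β}
    (hσ : Involutive σ) (w : β → ℕ) (hw : ∀ b, w (σ b) = w b)
    (hodd : ∀ b, σ b = b → Odd (w b)) :
    (∑ b, w b) % 2 = Fintype.card β % 2 := by
  have hpaired : ∑ b, ((w b + 1 : ℕ) : ZMod 2) = 0 := by
    refine Finset.sum_ninvolution σ (fun b => ?_) (fun b hb hfix => hb ?_)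
      (fun _ => Finset.mem_univ _) hσ
    · rw [hw]
      exact CharTwo.add_self_eq_zero _
    · exact ZMod.natCast_eq_zero_iff_even.mpr (hodd b hfix).add_one
  rw [← ZMod.natCast_eq_natCast_iff', ← CharTwo.add_eq_zero]
  simpa [Finset.sum_add_distrib] using hpaired

namespace MulAction

variable {G α : Type*} [Group G] [MulAction G α] (v : G)

theorem smul_smul_comm_of_mem_zpowers_sq {g : G} (hg : g ∈ zpowers (v ^ 2)) (a : α) :
    g • v • a = v • g • a := by
  obtain ⟨k, rfl⟩ := mem_zpowers_iff.mp hg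
  rw [smul_smul, smul_smul, ((Commute.refl v).pow_right 2).zpow_right k |>.eq]

theorem orbit_zpowers_sq_smul (a : α) :
    orbit (zpowers (v ^ 2)) (v • a) = (v • ·) '' orbit (zpowers (v ^ 2)) a := by
  ext b
  constructor
  · rintro ⟨g, rfl⟩
    exact ⟨g • a, mem_orbit _ _, (smul_smul_comm_of_mem_zpowers_sq v g.2 a).symm⟩
  · rintro ⟨_, ⟨g, rfl⟩, rfl⟩
    exact ⟨g, smul_smul_comm_of_mem_zpowers_sq v g.2 a⟩

def smulOrbitsZPowersSq :
    orbitRel.Quotient (zpowers (v ^ 2)) α → orbitRel.Quotient (zpowers (v ^ 2)) α :=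
  Quotient.map' (v • ·) fun a b ⟨g, hg⟩ => ⟨g, by
    change (g : G) • v • b = v • a
    rw [smul_smul_comm_of_mem_zpowers_sq v g.2, ← hg]
    rfl⟩

theorem smulOrbitsZPowersSq_mk (a : α) :
    smulOrbitsZPowersSq v (Quotient.mk'' a) = Quotient.mk'' (v • a) := rfl

theorem involutive_smulOrbitsZPowersSq : Involutive (smulOrbitsZPowersSq (α := α) v) := by
  rintro ⟨a⟩
  refine Quotient.sound' ⟨⟨v ^ 2, mem_zpowers _⟩, ?_⟩
  change (v ^ 2) • a = v • v • a
  rw [pow_two, mul_smul]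

theorem card_orbit_smulOrbitsZPowersSq (ω : orbitRel.Quotient (zpowers (v ^ 2)) α) :
    Nat.card (smulOrbitsZPowersSq v ω).orbit = Nat.card ω.orbit := by
  induction ω using Quotient.inductionOn' with
  | h a =>
    rw [smulOrbitsZPowersSq_mk, orbitRel.Quotient.orbit_mk, orbitRel.Quotient.orbit_mk,
      orbit_zpowers_sq_smul, Nat.card_image_of_injective (MulAction.injective v)]

theorem odd_card_orbit_of_smulOrbitsZPowersSq_eq {ω : orbitRel.Quotient (zpowers (v ^ 2)) α}
    (hω : smulOrbitsZPowersSq v ω = ω) : Odd (Nat.card ω.orbit) := by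
  induction ω using Quotient.inductionOn' with
  | h a =>
    obtain ⟨⟨g, hg⟩, hga⟩ := Quotient.eq''.mp hω
    obtain ⟨k, rfl⟩ := mem_zpowers_iff.mp hg
    have hperiodic : v ^ (2 * k - 1) • a = a := by
      apply MulAction.injective v
      change v • _ = v • a
      rw [smul_smul, ← zpow_one_add, add_sub_cancel, zpow_mul, zpow_ofNat]
      exact hga
    have hp : Odd (minimalPeriod (v • ·) a) := by
      rw [← Int.odd_coe_nat, ← Int.not_even_iff_odd]
      intro heven
      obtain ⟨m, hm⟩ := (zpow_smul_eq_iff_minimalPeriod_dvd.mp hperiodic).even heven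
      omega
    rw [orbitRel.Quotient.orbit_mk, Nat.card_congr (orbitZPowersEquiv _ a), Nat.card_zmod,
      ← smul_iterate, minimalPeriod_iterate_eq_div_gcd two_ne_zero, Nat.coprime_two_right.mpr hp,
      Nat.div_one]
    exact hp

theorem card_orbitRel_quotient_zpowers_sq_mod_two [Finite α] :
    Nat.card (orbitRel.Quotient (zpowers (v ^ 2)) α) % 2 = Nat.card α % 2 := by
  have : Fintype (orbitRel.Quotient (zpowers (v ^ 2)) α) := Fintype.ofFinite _
  rw [Nat.card_congr (selfEquivSigmaOrbits' (zpowers (v ^ 2)) α), Nat.card_sigma,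
    sum_mod_two_eq_card_mod_two_of_involutive (involutive_smulOrbitsZPowersSq v) _
      (card_orbit_smulOrbitsZPowersSq v) (fun _ => odd_card_orbit_of_smulOrbitsZPowersSq_eq v),
    Nat.card_eq_fintype_card]

end MulAction

theorem stmt4_general (e q r : ℕ) (he : 1 ≤ e) (hqr : q = r ^ 2) (hr : Nat.Coprime r e)
    (u : (ZMod e)ˣ) (hu : (u : ZMod e) = (q : ZMod e)) :
    Nat.card (Quotient (MulAction.orbitRel (Subgroup.zpowers u) (ZMod e))) % 2 = e % 2 := by
  have : NeZero e := ⟨by omega⟩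
  obtain rfl : u = ZMod.unitOfCoprime r hr ^ 2 := by
    ext
    simp [hu, hqr]
  simpa only [Nat.card_zmod] using card_orbitRel_quotient_zpowers_sq_mod_two (α := ZMod e) _

/-- For `e ≥ 1` and `q` a unit modulo `e` which is a perfect square, say
`q = r²` with `r` coprime to `e`, the number of orbits of `ℤ/e` under `x ↦ qx`
(the action of the cyclic group generated by the unit `u` corresponding to `q`)
is odd if `e` is odd, and even if `e` is even; i.e. it has the same parity as `e`. -/
theorem stmt4 (e q r : ℕ) (he : 1 ≤ e) (hqr : q = r ^ 2) (hr : Nat.Coprime r e)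
    (hq : Nat.Coprime q e)
    (u : (ZMod e)ˣ) (hu : (u : ZMod e) = (q : ZMod e)) :
    Nat.card (Quotient (MulAction.orbitRel (Subgroup.zpowers u) (ZMod e))) % 2 = e % 2 :=
  stmt4_general e q r he hqr hr u hu
end

section
/- Let H be a group and K a finite-index subgroup. For a finite-dimensional complex representation π of H, the composition of the determinant of the restriction of π to K with the transfer map T: H^ab → K^ab equals (det π)^{[H:K]} as a character of H. -/
/-! The transfer of a character that is already defined on the whole group is its `[G:H]`-th
power: in the explicit formula, each `⟨g⟩`-orbit of `G ⧸ H` of length `m` contributes a conjugate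
of `g ^ m`, on which the abelian character takes the value `ψ g ^ m`, and the orbit lengths sum
to `[G:H]`. -/

theorem MonoidHom.transfer_comp_subtype {G A : Type*} [Group G] [CommGroup A]
    (H : Subgroup G) [H.FiniteIndex] (ψ : G →* A) :
    transfer (ψ.comp H.subtype) = ψ ^ H.index := by
  classical
  let := H.fintypeQuotientOfFiniteIndex
  ext g
  rw [transfer_eq_prod_quotient_orbitRel_zpowers_quot, MonoidHom.pow_apply,
    Subgroup.index_eq_sum_minimalPeriod H g, ← Finset.prod_pow_eq_pow_sum]
  refine Finset.prod_congr rfl fun q _ => ?_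
  simp only [MonoidHom.comp_apply, Subgroup.coe_subtype, map_mul, map_inv, map_pow]
  rw [mul_comm, mul_inv_cancel_left]

/-- Let `H` be a group and `K` a finite-index subgroup.  For a
finite-dimensional complex representation `π` of `H` (realized as `π : H →* GL(n, ℂ)`),
the composition of the determinant of the restriction of `π` to `K` with the transfer map
`T : H^{ab} → K^{ab}` equals `(det π)^{[H:K]}` as a character of `H`. -/
theorem stmt7 {H : Type*} [Group H] (K : Subgroup H) [K.FiniteIndex] (n : ℕ)
    (π : H →* Matrix.GeneralLinearGroup (Fin n) ℂ) :
    MonoidHom.transfer ((Matrix.GeneralLinearGroup.det).comp (π.comp K.subtype)) =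
      ((Matrix.GeneralLinearGroup.det).comp π) ^ K.index :=
  MonoidHom.transfer_comp_subtype K (Matrix.GeneralLinearGroup.det.comp π)
end

section
/- Let H be a group and K a finite-index subgroup. For a finite-dimensional complex representation σ of K, det(Ind_K^H σ) = (det Ind_K^H 1_K)^{dim σ} · (det σ ∘ T^H_K), where T^H_K is the transfer map H^ab → K^ab and 1_K is the trivial representation of K. -/
/-!
Choosing representatives `t q` of the cosets `q ∈ H ⧸ K` identifies `Ind_K^H σ` with
`H ⧸ K → V`. In these coordinates `g` permutes the coordinates as it permutes `H ⧸ K`, and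
then acts on coordinate `q` by `σ ((t q)⁻¹ g t (g⁻¹ q))`. Hence
`det (Ind σ) g = sign(g on H ⧸ K) ^ dim σ * ∏ q, det σ ((t q)⁻¹ g t (g⁻¹ q))`, and the product
is `det σ` applied to the transfer of `g`. For `σ = 1_K` this gives
`det (Ind 1_K) g = sign(g on H ⧸ K)`.
-/

/-- The space of the induced representation `Ind_K^H σ`: functions `f : H → V` with
`f(k·h) = σ(k)(f h)` for `k ∈ K`, as a submodule of `H → V`. -/
def indSubmodule {H : Type*} [Group H] (K : Subgroup H) {V : Type*} [AddCommGroup V]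
    [Module ℂ V] (σ : Representation ℂ K V) : Submodule ℂ (H → V) where
  carrier := {f | ∀ (k : K) (h : H), f (↑k * h) = σ k (f h)}
  add_mem' := by
    intro f g hf hg k h
    simp only [Pi.add_apply, hf k h, hg k h, map_add]
  zero_mem' := by
    intro k h
    simp only [Pi.zero_apply, map_zero]
  smul_mem' := by
    intro c f hf k h
    simp only [Pi.smul_apply, hf k h, map_smul]

/-- The induced representation `Ind_K^H σ` of `H`, acting by right translation on
`indSubmodule K σ`. -/
def indRep {H : Type*} [Group H] (K : Subgroup H) {V : Type*} [AddCommGroup V]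
    [Module ℂ V] (σ : Representation ℂ K V) :
    Representation ℂ H (indSubmodule K σ) where
  toFun h :=
    { toFun := fun f => ⟨fun x => f.val (x * h), fun k x => by
        have := f.prop k (x * h)
        simpa [mul_assoc] using this⟩
      map_add' := fun f g => rfl
      map_smul' := fun c f => rfl }
  map_one' := by
    ext f x
    show f.val (x * 1) = f.val x
    rw [mul_one]
  map_mul' := fun h₁ h₂ => by
    ext f x
    show f.val (x * (h₁ * h₂)) = f.val (x * h₁ * h₂)
    rw [mul_assoc]

namespace LinearMap

variable {R : Type*} [CommRing R] {ι : Type*} [Fintype ι] [DecidableEq ι]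

theorem det_funLeft_perm_self (π : Equiv.Perm ι) :
    LinearMap.det (funLeft R R ⇑π) = Equiv.Perm.sign π := by
  have : funLeft R R ⇑π = Matrix.toLin' (Matrix.submatrix (1 : Matrix ι ι R) ⇑π _root_.id) := by
    ext v i
    simp [funLeft_apply, Matrix.one_apply, Pi.single_apply]
  rw [this, det_toLin', Matrix.det_permute, Matrix.det_one, mul_one]

variable [Nontrivial R] {M : Type*} [AddCommGroup M] [Module R M] [Module.Free R M]
  [Module.Finite R M]

theorem det_funLeft_perm (π : Equiv.Perm ι) :
    LinearMap.det (funLeft R M ⇑π) = (Equiv.Perm.sign π : R) ^ Module.finrank R M := by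
  let b := Module.Free.chooseBasis R M
  let swap : (ι → Module.Free.ChooseBasisIndex R M → R) ≃ₗ[R]
      (Module.Free.ChooseBasisIndex R M → ι → R) :=
    { Equiv.piComm _ with map_add' := fun _ _ => rfl, map_smul' := fun _ _ => rfl }
  let e := (LinearEquiv.piCongrRight fun _ => b.equivFun).trans swap
  have : e.toLinearMap ∘ₗ funLeft R M ⇑π ∘ₗ e.symm.toLinearMap =
      pi fun j => funLeft R R ⇑π ∘ₗ proj j := by
    refine LinearMap.ext fun v => funext fun j => funext fun i => ?_
    exact congrFun (b.equivFun.apply_symm_apply fun j => v j (π i)) j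
  rw [← det_conj (funLeft R M ⇑π) e, this, det_pi]
  simp [det_funLeft_perm_self, Module.finrank_eq_card_chooseBasisIndex]

theorem det_pi_comp_proj_perm (π : Equiv.Perm ι) (f : ι → M →ₗ[R] M) :
    LinearMap.det (pi fun i => f i ∘ₗ proj (π i)) =
      (Equiv.Perm.sign π : R) ^ Module.finrank R M * ∏ i, LinearMap.det (f i) := by
  have : (pi fun i => f i ∘ₗ proj (π i)) = (pi fun i => f i ∘ₗ proj i) ∘ₗ funLeft R M ⇑π := rfl
  rw [this, det_comp, det_pi, det_funLeft_perm, mul_comm]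

end LinearMap

namespace Subgroup

variable {H : Type*} [Group H] (K : Subgroup H)

theorem out_inv_mul_mul_out_mem (g : H) (q : H ⧸ K) : q.out⁻¹ * g * (g⁻¹ • q).out ∈ K := by
  rw [mul_assoc, ← QuotientGroup.eq, ← smul_eq_mul, ← MulAction.Quotient.smul_mk,
    QuotientGroup.out_eq', QuotientGroup.out_eq', smul_inv_smul]

noncomputable def transferCocycle (g : H) (q : H ⧸ K) : K :=
  ⟨q.out⁻¹ * g * (g⁻¹ • q).out, out_inv_mul_mul_out_mem K g q⟩

theorem mul_out_mk_inv_mem (h : H) : h * ((h⁻¹ : H) : H ⧸ K).out ∈ K := by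
  simpa using QuotientGroup.eq.mp (QuotientGroup.out_eq' ((h⁻¹ : H) : H ⧸ K)).symm

theorem mk_inv_coe_mul (k : K) (h : H) : (((k * h)⁻¹ : H) : H ⧸ K) = ((h⁻¹ : H) : H ⧸ K) := by
  rw [mul_inv_rev]
  exact QuotientGroup.mk_mul_of_mem _ (inv_mem k.2)

noncomputable def cosetFactor (h : H) : K :=
  ⟨h * ((h⁻¹ : H) : H ⧸ K).out, mul_out_mk_inv_mem K h⟩

theorem cosetFactor_mul_inv_out (h : H) :
    (cosetFactor K h : H) * ((h⁻¹ : H) : H ⧸ K).out⁻¹ = h :=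
  mul_inv_cancel_right h _

theorem cosetFactor_mul (k : K) (h : H) : cosetFactor K (↑k * h) = k * cosetFactor K h := by
  ext
  simp only [cosetFactor, mk_inv_coe_mul, coe_mul, mul_assoc]

theorem cosetFactor_out_inv (q : H ⧸ K) : cosetFactor K q.out⁻¹ = 1 := by
  ext
  simp [cosetFactor]

theorem cosetFactor_out_inv_mul (g : H) (q : H ⧸ K) :
    cosetFactor K (q.out⁻¹ * g) = transferCocycle K g q := by
  have : (((q.out⁻¹ * g)⁻¹ : H) : H ⧸ K) = g⁻¹ • q := by
    rw [mul_inv_rev, inv_inv, ← smul_eq_mul, ← MulAction.Quotient.smul_mk, QuotientGroup.out_eq']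
  ext
  simp only [cosetFactor, transferCocycle, this]

end Subgroup

theorem MonoidHom.transfer_eq_prod_transferCocycle {H : Type*} [Group H] {K : Subgroup H}
    [K.FiniteIndex] [Fintype (H ⧸ K)] {A : Type*} [CommGroup A] (φ : K →* A) (g : H) :
    transfer φ g = ∏ q : H ⧸ K, φ (K.transferCocycle g q) := by
  have hout : ∀ q : H ⧸ K, ((default : K.LeftTransversal).2.leftQuotientEquiv q : H) = q.out :=
    Subgroup.IsComplement.leftQuotientEquiv_apply QuotientGroup.out_eq'
  rw [transfer_def φ default g, Subgroup.leftTransversals.diff, Subsingleton.elim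
    K.fintypeQuotientOfFiniteIndex]
  refine Finset.prod_congr rfl fun q _ => congrArg φ (Subtype.ext ?_)
  simp only [Subgroup.smul_apply_eq_smul_apply_inv_smul, hout, smul_eq_mul,
    Subgroup.transferCocycle, mul_assoc]

section Induction

variable {H : Type*} [Group H] (K : Subgroup H) {V : Type*} [AddCommGroup V] [Module ℂ V]
  (σ : Representation ℂ K V)

theorem cosetExtend_mem_indSubmodule (v : H ⧸ K → V) :
    (fun h => σ (K.cosetFactor h) (v ((h⁻¹ : H) : H ⧸ K))) ∈ indSubmodule K σ := by
  intro k h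
  simp only [K.cosetFactor_mul, map_mul, K.mk_inv_coe_mul, Module.End.mul_apply]

/-- An element of `indSubmodule K σ` is determined by its values at the representatives
`q.out⁻¹` of the right cosets of `K`, on which it is unconstrained. -/
noncomputable def indSubmoduleEquiv : indSubmodule K σ ≃ₗ[ℂ] (H ⧸ K → V) where
  toFun f q := f.1 q.out⁻¹
  map_add' _ _ := rfl
  map_smul' _ _ := rfl
  invFun v := ⟨_, cosetExtend_mem_indSubmodule K σ v⟩
  left_inv f := by
    ext h
    simp only
    rw [← f.2, K.cosetFactor_mul_inv_out]
  right_inv v := by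
    funext q
    simp [K.cosetFactor_out_inv]

theorem indSubmoduleEquiv_conj_indRep (g : H) :
    (indSubmoduleEquiv K σ).toLinearMap ∘ₗ indRep K σ g ∘ₗ
        (indSubmoduleEquiv K σ).symm.toLinearMap =
      LinearMap.pi fun q => σ (K.transferCocycle g q) ∘ₗ
        LinearMap.proj (MulAction.toPerm g⁻¹ q) := by
  refine LinearMap.ext fun v => funext fun q => ?_
  show σ (K.cosetFactor (q.out⁻¹ * g)) (v _) = σ (K.transferCocycle g q) (v (g⁻¹ • q))
  rw [K.cosetFactor_out_inv_mul, mul_inv_rev, inv_inv, ← smul_eq_mul,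
    ← MulAction.Quotient.smul_mk, QuotientGroup.out_eq']

theorem det_indRep [FiniteDimensional ℂ V] [Fintype (H ⧸ K)] [DecidableEq (H ⧸ K)] (g : H) :
    LinearMap.det (indRep K σ g) =
      (Equiv.Perm.sign (MulAction.toPerm g : Equiv.Perm (H ⧸ K)) : ℂ) ^ Module.finrank ℂ V *
        ∏ q, LinearMap.det (σ (K.transferCocycle g q)) := by
  rw [← LinearMap.det_conj (indRep K σ g) (indSubmoduleEquiv K σ), indSubmoduleEquiv_conj_indRep,
    LinearMap.det_pi_comp_proj_perm, ← Equiv.Perm.sign_inv,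
    show (MulAction.toPerm g⁻¹)⁻¹ = (MulAction.toPerm g : Equiv.Perm (H ⧸ K)) by ext; simp]

theorem det_indRep_trivial [Fintype (H ⧸ K)] [DecidableEq (H ⧸ K)] (g : H) :
    LinearMap.det (indRep K (Representation.trivial ℂ K ℂ) g) =
      Equiv.Perm.sign (MulAction.toPerm g : Equiv.Perm (H ⧸ K)) := by
  simp [det_indRep]

end Induction

/-- Let `H` be a group and `K` a finite-index subgroup.  For a
finite-dimensional complex representation `σ` of `K`,
`det(Ind_K^H σ) = (det Ind_K^H 1_K)^{dim σ} · (det σ ∘ T^H_K)`,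
where `T^H_K` is the transfer map `H^{ab} → K^{ab}` and `1_K` is the trivial
representation of `K`. -/
theorem stmt8 {H : Type*} [Group H] (K : Subgroup H) [K.FiniteIndex] {V : Type*}
    [AddCommGroup V] [Module ℂ V] [FiniteDimensional ℂ V]
    (σ : Representation ℂ K V) :
    MonoidHom.toHomUnits (LinearMap.det.comp (indRep K σ)) =
      (MonoidHom.toHomUnits
          (LinearMap.det.comp (indRep K (Representation.trivial ℂ (G := K) (V := ℂ)))))
          ^ (Module.finrank ℂ V) *
        MonoidHom.transfer (MonoidHom.toHomUnits (LinearMap.det.comp σ)) := by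
  classical
  let := K.fintypeQuotientOfFiniteIndex
  ext g
  simp only [MonoidHom.mul_apply, MonoidHom.pow_apply, Units.val_mul, Units.val_pow_eq_pow_val,
    MonoidHom.coe_toHomUnits, MonoidHom.comp_apply, MonoidHom.transfer_eq_prod_transferCocycle,
    Units.coe_prod]
  rw [det_indRep, det_indRep_trivial]
end

section
/- Let H be a group and K a finite-index subgroup. Writing K_g = K ∩ gKg⁻¹ for g ∈ H, one has det(Ind_K^H 1_K) = ∏_{[g]} det(Ind_{K_g}^H 1_{K_g}), where the product runs over the non-trivial double cosets [g] ∈ K\H/K (those with g ∉ K), and the factor det(Ind_{K_g}^H 1_{K_g}) is independent of the representative g of the double coset. -/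
/-- The sign character of a group `H` acting on the coset space `H ⧸ K`: this is
`det(Ind_K^H 1_K)`, the determinant of the permutation representation of `H` on `H ⧸ K`
(defined to be `1` when the quotient is infinite). -/
noncomputable def signChar {H : Type*} [Group H] (K : Subgroup H) : H →* ℤˣ :=
  letI := Classical.dec (Finite (H ⧸ K))
  if h : Finite (H ⧸ K) then
    letI := h
    letI := Fintype.ofFinite (H ⧸ K)
    letI : DecidableEq (H ⧸ K) := Classical.decEq _
    Equiv.Perm.sign.comp (MulAction.toPermHom H (H ⧸ K))
  else 1

/-- `K_g = K ∩ gKg⁻¹`. -/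
def conjInter {H : Type*} [Group H] (K : Subgroup H) (g : H) : Subgroup H :=
  K ⊓ K.map (MulAut.conj g).toMonoidHom

/-! Let `H` act diagonally on `X = H⧸K × H⧸K`. If `σ` is the permutation of `H⧸K` induced by
an element, then `σ × σ` has sign `sign σ ^ (2 |H⧸K|) = 1`. The orbit of `(K, gK)` consists of
the pairs `(aK, bK)` with `a⁻¹b ∈ KgK`, so the orbits are indexed by the double cosets, and the
orbit of `(K, gK)` is `H⧸K_g` because `K_g` is its stabilizer. The diagonal (`g = 1`) contributes
`det Ind 1_K`, so `det Ind 1_K · ∏_{[g] ≠ 1} det Ind 1_{K_g} = 1`, and signs are their own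
inverses. Representatives of one double coset give points of one orbit, whose stabilizers have
isomorphic coset spaces. -/

open Equiv Equiv.Perm MulAction

theorem Equiv.Perm.sigmaCongrRight_mulSingle {ι : Type*} [DecidableEq ι] {F : ι → Type*}
    (i : ι) (q : Perm (F i)) :
    Perm.sigmaCongrRight (Pi.mulSingle i q) = q.extendDomain (sigmaSubtype i).symm := by
  ext ⟨j, b⟩ : 1
  by_cases h : j = i
  · subst h
    rw [extendDomain_apply_subtype q (sigmaSubtype j).symm (b := (⟨j, b⟩ : Σ k, F k)) rfl]
    simp
    rfl
  · rw [extendDomain_apply_not_subtype q (sigmaSubtype i).symm (b := (⟨j, b⟩ : Σ k, F k)) h]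
    simp [Pi.mulSingle_eq_of_ne h]

theorem Equiv.Perm.sign_sigmaCongrRight {ι : Type*} [Fintype ι] [DecidableEq ι] {F : ι → Type*}
    [∀ i, Fintype (F i)] [∀ i, DecidableEq (F i)] (p : ∀ i, Perm (F i)) :
    sign (Perm.sigmaCongrRight p) = ∏ i, sign (p i) := by
  have key : sign.comp (sigmaCongrRightHom F) =
      ∏ i, (sign : Perm (F i) →* ℤˣ).comp (Pi.evalMonoidHom _ i) := by
    refine MonoidHom.pi_ext fun i q => ?_
    rw [MonoidHom.finsetProd_apply, Fintype.prod_eq_single i fun j hj => by simp [hj]]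
    simp [sigmaCongrRight_mulSingle]
  simpa using congr($key p)

/-- Taken to be trivial when `X` is infinite, matching `signChar`. -/
noncomputable def permSign (G X : Type*) [Group G] [MulAction G X] : G →* ℤˣ :=
  letI := Classical.dec (Finite X)
  if h : Finite X then
    letI := h
    letI := Fintype.ofFinite X
    letI : DecidableEq X := Classical.decEq _
    Equiv.Perm.sign.comp (MulAction.toPermHom G X)
  else 1

section PermSign

variable {G : Type*} [Group G]

theorem signChar_eq_permSign (K : Subgroup G) : signChar K = permSign G (G ⧸ K) := rfl

variable {X Y : Type*} [MulAction G X] [MulAction G Y]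

theorem permSign_apply [Fintype X] [DecidableEq X] (g : G) :
    permSign G X g = sign (toPerm g : Perm X) := by
  rw [permSign, dif_pos (Finite.of_fintype X), MonoidHom.comp_apply, toPermHom_apply]
  congr!

theorem permSign_of_infinite [Infinite X] : permSign G X = 1 := by
  rw [permSign, dif_neg (not_finite_iff_infinite.mpr ‹_›)]

theorem permSign_congr (e : X ≃ Y) (he : ∀ (g : G) x, e (g • x) = g • e x) :
    permSign G X = permSign G Y := by
  by_cases hX : Finite X
  · have : Finite Y := .of_equiv X e
    classical
    let := Fintype.ofFinite X
    let := Fintype.ofFinite Y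
    ext g
    have hperm : e.permCongr (toPerm g) = (toPerm g : Perm Y) := by
      ext y
      simp [Equiv.permCongr_apply, he]
    rw [permSign_apply, permSign_apply, ← hperm, sign_permCongr]
  · have := not_finite_iff_infinite.mp hX
    have := Infinite.of_injective e e.injective
    rw [permSign_of_infinite, permSign_of_infinite]

theorem permSign_sigma {ι : Type*} [Fintype ι] {F : ι → Type*} [∀ i, MulAction G (F i)]
    [∀ i, Finite (F i)] : permSign G (Σ i, F i) = ∏ i, permSign G (F i) := by
  classical
  let := fun i => Fintype.ofFinite (F i)
  ext g
  have hperm : (toPerm g : Perm (Σ i, F i)) = Perm.sigmaCongrRight fun i => toPerm g := rfl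
  simp only [MonoidHom.finsetProd_apply, permSign_apply, hperm, sign_sigmaCongrRight]

theorem permSign_prod_self : permSign G (X × X) = 1 := by
  by_cases hX : Finite X
  · classical
    let := Fintype.ofFinite X
    ext g
    have hperm : (toPerm g : Perm (X × X)) =
        prodCongrLeft (fun _ => toPerm g) * prodCongrRight (fun _ => toPerm g) := rfl
    rw [permSign_apply, hperm, map_mul, sign_prodCongrLeft, sign_prodCongrRight,
      Finset.prod_const, ← mul_pow, Int.units_mul_self, one_pow, MonoidHom.one_apply]
  · have := not_finite_iff_infinite.mp hX
    exact permSign_of_infinite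

end PermSign

section Orbits

variable {G X : Type*} [Group G] [MulAction G X]

theorem permSign_eq_prod_orbit [Finite X] {ι : Type*} [Fintype ι] (x : ι → X)
    (hx : ∀ y, ∃! i, y ∈ orbit G (x i)) : permSign G X = ∏ i, permSign G (orbit G (x i)) := by
  have hbij : Function.Bijective fun s : Σ i, orbit G (x i) => (s.2 : X) := by
    refine ⟨?_, fun y => ?_⟩
    · rintro ⟨i, y⟩ ⟨j, z⟩ (hyz : (y : X) = z)
      obtain rfl : i = j := (hx y).unique y.2 (hyz ▸ z.2)
      exact Sigma.ext rfl (heq_of_eq (Subtype.ext hyz))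
    · obtain ⟨i, hi, -⟩ := hx y
      exact ⟨⟨i, y, hi⟩, rfl⟩
  rw [← permSign_sigma]
  exact (permSign_congr (Equiv.ofBijective _ hbij) fun _ _ => rfl).symm

theorem signChar_stabilizer (x : X) : signChar (stabilizer G x) = permSign G (orbit G x) := by
  rw [signChar_eq_permSign]
  refine permSign_congr (orbitEquivQuotientStabilizer G x).symm fun g q => ?_
  induction q using QuotientGroup.induction_on with
  | H a => ext; simp [orbitEquivQuotientStabilizer_symm_apply, mul_smul]

theorem signChar_stabilizer_eq_of_mem_orbit {x y : X} (h : y ∈ orbit G x) :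
    signChar (stabilizer G y) = signChar (stabilizer G x) := by
  rw [signChar_stabilizer, signChar_stabilizer]
  exact permSign_congr (Equiv.setCongr (orbit_eq_iff.mpr h)) fun _ _ => rfl

end Orbits

section DoubleCosets

variable {G : Type*} [Group G] (K : Subgroup G)

theorem stabilizer_mk_one_mk (g : G) :
    stabilizer G (((1 : G) : G ⧸ K), (g : G ⧸ K)) = conjInter K g := by
  have hg : (g : G ⧸ K) = g • ((1 : G) : G ⧸ K) := by simp
  have hprod (p q : G ⧸ K) : stabilizer G (p, q) = stabilizer G p ⊓ stabilizer G q := by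
    ext; simp [Prod.ext_iff]
  rw [hprod, hg, stabilizer_smul_eq_stabilizer_map_conj, stabilizer_quotient, conjInter]

theorem conjInter_one : conjInter K 1 = K := by
  ext x
  simp [conjInter, Subgroup.mem_map]

theorem mk_mk_mem_orbit_iff (a b g : G) :
    ((a : G ⧸ K), (b : G ⧸ K)) ∈ orbit G (((1 : G) : G ⧸ K), (g : G ⧸ K)) ↔
      DoubleCoset.mk K K g = DoubleCoset.mk K K (a⁻¹ * b) := by
  rw [DoubleCoset.eq]
  constructor
  · rintro ⟨c, hc⟩
    simp only [Prod.smul_mk, Prod.ext_iff, MulAction.Quotient.smul_coe, QuotientGroup.eq] at hc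
    exact ⟨a⁻¹ * c, by simpa using K.inv_mem hc.1, (c * g)⁻¹ * b, hc.2, by group⟩
  · rintro ⟨k₁, hk₁, k₂, hk₂, h⟩
    refine ⟨a * k₁, Prod.ext (QuotientGroup.eq.mpr ?_) (QuotientGroup.eq.mpr ?_)⟩
    · simpa using K.inv_mem hk₁
    · show (a * k₁ * g)⁻¹ * b ∈ K
      have : (a * k₁ * g)⁻¹ * b = k₂ :=
        calc (a * k₁ * g)⁻¹ * b = (k₁ * g)⁻¹ * (a⁻¹ * b) := by group
          _ = k₂ := by rw [h]; group
      exact this ▸ hk₂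

theorem DoubleCoset.mk_eq_mk_one_iff {g : G} :
    DoubleCoset.mk K K g = DoubleCoset.mk K K 1 ↔ g ∈ K := by
  rw [DoubleCoset.eq]
  constructor
  · rintro ⟨k₁, hk₁, k₂, hk₂, h⟩
    have : g = k₁⁻¹ * k₂⁻¹ := by
      calc g = k₁⁻¹ * (k₁ * g * k₂) * k₂⁻¹ := by group
        _ = k₁⁻¹ * k₂⁻¹ := by rw [← h]; group
    exact this ▸ K.mul_mem (K.inv_mem hk₁) (K.inv_mem hk₂)
  · exact fun hg => ⟨g⁻¹, K.inv_mem hg, 1, K.one_mem, by group⟩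

theorem existsUnique_doubleCoset_mk_insert_one [DecidableEq G] {S : Finset G}
    (hS : ∀ g ∈ S, g ∉ K)
    (hrep : ∀ h : G, h ∉ K → ∃! g, g ∈ S ∧ DoubleCoset.mk K K g = DoubleCoset.mk K K h)
    (h : G) : ∃! g : ↥(insert 1 S), DoubleCoset.mk K K g = DoubleCoset.mk K K h := by
  by_cases hh : h ∈ K
  · refine ⟨⟨1, Finset.mem_insert_self 1 S⟩, ((DoubleCoset.mk_eq_mk_one_iff K).mpr hh).symm, ?_⟩
    rintro ⟨g, hg⟩ hgh
    rcases Finset.mem_insert.mp hg with rfl | hgS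
    · rfl
    · have hgK := (DoubleCoset.mk_eq_mk_one_iff K).mp
        (hgh.trans ((DoubleCoset.mk_eq_mk_one_iff K).mpr hh))
      exact absurd hgK (hS g hgS)
  · obtain ⟨g, ⟨hgS, hgh⟩, huniq⟩ := hrep h hh
    refine ⟨⟨g, Finset.mem_insert_of_mem hgS⟩, hgh, ?_⟩
    rintro ⟨g', hg'⟩ hg'h
    rcases Finset.mem_insert.mp hg' with rfl | hg'S
    · exact absurd ((DoubleCoset.mk_eq_mk_one_iff K).mp hg'h.symm) hh
    · exact Subtype.ext (huniq g' ⟨hg'S, hg'h⟩)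

end DoubleCosets

theorem MonoidHom.inv_eq_self_of_intUnits {G : Type*} [Group G] (χ : G →* ℤˣ) : χ⁻¹ = χ :=
  MonoidHom.ext fun g => Int.units_inv_eq_self (χ g)

/-- Let `H` be a group and `K` a finite-index subgroup, `K_g = K ∩ gKg⁻¹`.
Then `det(Ind_K^H 1_K) = ∏_{[g]} det(Ind_{K_g}^H 1_{K_g})`, the product over the
non-trivial double cosets `[g] ∈ K\H/K` (represented by a set `S` containing exactly one
representative of each non-trivial double coset), and moreover the factor
`det(Ind_{K_g}^H 1_{K_g})` is independent of the representative `g` of the double coset.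
Here `det(Ind 1)` is the sign character of the permutation action of `H` on the coset
space. -/
theorem stmt9 {H : Type*} [Group H] (K : Subgroup H) [K.FiniteIndex] (S : Finset H)
    (hS : ∀ g ∈ S, g ∉ K)
    (hrep : ∀ h : H, h ∉ K → ∃! g, g ∈ S ∧ DoubleCoset.mk K K g = DoubleCoset.mk K K h) :
    (signChar K = ∏ g ∈ S, signChar (conjInter K g)) ∧
      ∀ g h : H, DoubleCoset.mk K K g = DoubleCoset.mk K K h →
        signChar (conjInter K g) = signChar (conjInter K h) := by
  refine ⟨?_, fun g h hgh => ?_⟩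
  · classical
    have hx (y : (H ⧸ K) × (H ⧸ K)) :
        ∃! g : ↥(insert 1 S), y ∈ orbit H (((1 : H) : H ⧸ K), ((g : H) : H ⧸ K)) := by
      obtain ⟨p, q⟩ := y
      induction p using QuotientGroup.induction_on with | H a =>
      induction q using QuotientGroup.induction_on with | H b =>
      simpa only [mk_mk_mem_orbit_iff] using
        existsUnique_doubleCoset_mk_insert_one K hS hrep (a⁻¹ * b)
    have hdecomp := permSign_eq_prod_orbit _ hx
    simp only [permSign_prod_self, ← signChar_stabilizer, stabilizer_mk_one_mk] at hdecomp
    rw [Finset.prod_coe_sort (insert 1 S) fun g => signChar (conjInter K g),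
      Finset.prod_insert fun h1 => hS 1 h1 K.one_mem, conjInter_one] at hdecomp
    rw [eq_inv_of_mul_eq_one_right hdecomp.symm, MonoidHom.inv_eq_self_of_intUnits]
  · rw [← stabilizer_mk_one_mk, ← stabilizer_mk_one_mk]
    exact signChar_stabilizer_eq_of_mem_orbit
      ((mk_mk_mem_orbit_iff K 1 g h).mpr (by simpa using hgh.symm))
end
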